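/- For every finite state space Ω with full-support prior μ, every f : Ω → [0,1], every pair of initial partitions Π_{A,0}, Π_{B,0}, and every ε ∈ (0,1) and δ ∈ (0,1], there exists a natural number t ≤ 3072/(δε²) such that after t messages of the discretized protocol, Alice and Bob (ε,δ)-agree: μ({ω : |E_{A,t}(ω) − E_{B,t}(ω)| > ε}) ≤ δ. In particular, O(1/(δε²)) messages of 2 bits each suffice for (ε,δ)-agreement. -/

import Mathlib

open scoped Classical BigOperators

/-- A partition of a finite type, given by the cell containing each point. -/
structure FinPartition (Ω : Type*) [Fintype Ω] [DecidableEq Ω] where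
  cell : Ω → Finset Ω
  mem_cell : ∀ ω, ω ∈ cell ω
  cell_eq : ∀ ω ω', ω' ∈ cell ω → cell ω' = cell ω

variable {Ω : Type*} [Fintype Ω] [DecidableEq Ω]

/-- Conditional expectation `E[g | S]` of `g` over `S` under the weights `μ`. -/
noncomputable def condExp (μ g : Ω → ℝ) (S : Finset Ω) : ℝ :=
  (∑ ω ∈ S, μ ω * g ω) / ∑ ω ∈ S, μ ω

/-- `E_P(ω) = E[f | P(ω)]`, the partition-conditional expectation of `f`. -/
noncomputable def expOn (μ f : Ω → ℝ) (P : FinPartition Ω) (ω : Ω) : ℝ :=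
  condExp μ f (P.cell ω)

/-- The cell `Θ_P(ω) = {ω' : E_P(ω') = E_P(ω)}` of the level-set partition of `E_P`. -/
noncomputable def levelCell (μ f : Ω → ℝ) (P : FinPartition Ω) (ω : Ω) : Finset Ω :=
  Finset.univ.filter fun ω' => expOn μ f P ω' = expOn μ f P ω

/-- `P` refines `Q`: every cell of `P` is contained in the corresponding cell of `Q`. -/
def FinPartition.Refines (P Q : FinPartition Ω) : Prop := ∀ ω, P.cell ω ⊆ Q.cell ω

/-- The squared 2-norm `‖F‖₂² = Σ_ω μ(ω) F(ω)²`. -/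
noncomputable def norm2 (μ F : Ω → ℝ) : ℝ := ∑ ω, μ ω * F ω ^ 2

/-- Refine a partition by intersecting each cell with the level sets of `g`. -/
noncomputable def FinPartition.refineBy {M : Type*} (R : FinPartition Ω) (g : Ω → M) :
    FinPartition Ω where
  cell ω := R.cell ω ∩ Finset.univ.filter fun ω' => g ω' = g ω
  mem_cell ω := by
    simp only [Finset.mem_inter, Finset.mem_filter, Finset.mem_univ, true_and]
    exact ⟨R.mem_cell ω, trivial⟩
  cell_eq := by
    intro ω ω' h
    simp only [Finset.mem_inter, Finset.mem_filter, Finset.mem_univ, true_and] at h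
    show R.cell ω' ∩ Finset.univ.filter (fun ω'' => g ω'' = g ω') =
      R.cell ω ∩ Finset.univ.filter (fun ω'' => g ω'' = g ω)
    rw [R.cell_eq ω ω' h.1, h.2]

/-- The trivial partition (Charlie's initial knowledge: nothing). -/
def trivPartition : FinPartition Ω where
  cell _ := Finset.univ
  mem_cell ω := Finset.mem_univ ω
  cell_eq _ _ _ := rfl

/-- The 2-bit message ("high" = 1, "medium" = 0, "low" = -1) that the sender with
partition `sender` sends, relative to Charlie's partition `charlie`. -/
noncomputable def discMsg (μ f : Ω → ℝ) (ε : ℝ) (sender charlie : FinPartition Ω) (ω : Ω) : ℤ :=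
  if expOn μ f charlie ω + ε / 4 < expOn μ f sender ω then 1
  else if expOn μ f sender ω < expOn μ f charlie ω - ε / 4 then -1
  else 0

/-- The discretized protocol: the triple (Alice's, Bob's, Charlie's) partitions after
`t` messages.  At odd steps Alice sends "high"/"medium"/"low" comparing her expectation
to Charlie's, refining Bob's and Charlie's partitions; at even steps Bob sends. -/
noncomputable def discTriple (μ f : Ω → ℝ) (ε : ℝ) (PA PB : FinPartition Ω) :
    ℕ → FinPartition Ω × FinPartition Ω × FinPartition Ω
  | 0 => (PA, PB, trivPartition)
  | t + 1 =>
    let p := discTriple μ f ε PA PB t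
    if (t + 1) % 2 = 1 then
      (p.1, (p.2.1).refineBy (discMsg μ f ε p.1 p.2.2), (p.2.2).refineBy (discMsg μ f ε p.1 p.2.2))
    else
      ((p.1).refineBy (discMsg μ f ε p.2.1 p.2.2), p.2.1, (p.2.2).refineBy (discMsg μ f ε p.2.1 p.2.2))

/-! Charlie's expectation `E_C` is a martingale in the refinement of his partition, so its
squared 2-norm `Φ = ‖E_C‖₂²` is nondecreasing, bounded by `1`, and grows by `‖E_C' - E_C‖₂²`
at each step. Whenever a message is "high" or "low" at `ω`, Charlie's new cell consists of
points where the sender's expectation lies beyond his own by more than `ε/4`, so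
`|E_C'(ω) - E_C(ω)| ≥ ε/4` there. If, after Alice's message, Alice and Bob disagree by more
than `ε` at `ω`, then Alice's message or Bob's reply is not "medium" at `ω` (otherwise all
three expectations are within `3ε/4`). Hence every round of two messages during which the
disagreement mass exceeds `δ` raises `Φ` by at least `δε²/16`, and there can be at most
`16/(δε²)` such rounds. -/

namespace FinPartition

variable {P Q R : FinPartition Ω}

lemma mem_cell_comm {ω ω' : Ω} : ω' ∈ P.cell ω ↔ ω ∈ P.cell ω' :=
  ⟨fun h => P.cell_eq ω ω' h ▸ P.mem_cell ω, fun h => P.cell_eq ω' ω h ▸ P.mem_cell ω'⟩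

lemma Refines.cell_subset_of_mem (h : P.Refines Q) {ω ω' : Ω} (h' : ω' ∈ Q.cell ω) :
    P.cell ω' ⊆ Q.cell ω :=
  Q.cell_eq ω ω' h' ▸ h ω'

lemma mem_refineBy_cell {M : Type*} (g : Ω → M) {ω ω' : Ω} :
    ω' ∈ (R.refineBy g).cell ω ↔ ω' ∈ R.cell ω ∧ g ω' = g ω := by
  simp [refineBy]

lemma refineBy_refines {M : Type*} (g : Ω → M) : (R.refineBy g).Refines R :=
  fun _ => Finset.inter_subset_left

lemma Refines.refineBy {M : Type*} (h : P.Refines R) {g : Ω → M}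
    (hg : ∀ ω ω', ω' ∈ P.cell ω → g ω' = g ω) : P.Refines (R.refineBy g) :=
  fun ω _ hω' => (mem_refineBy_cell g).2 ⟨h ω hω', hg ω _ hω'⟩

lemma Refines.refineBy_mono {M : Type*} (h : P.Refines R) (g : Ω → M) :
    (P.refineBy g).Refines (R.refineBy g) := fun ω _ hω' =>
  have hω' := (mem_refineBy_cell g).1 hω'
  (mem_refineBy_cell g).2 ⟨h ω hω'.1, hω'.2⟩

end FinPartition

open FinPartition

lemma norm2_nonneg {ι : Type*} [Fintype ι] {μ : ι → ℝ} (hμ : ∀ i, 0 ≤ μ i) (F : ι → ℝ) :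
    0 ≤ norm2 μ F :=
  Finset.sum_nonneg fun i _ => mul_nonneg (hμ i) (sq_nonneg _)

lemma condExp_mem {ι : Type*} {μ g : ι → ℝ} {S : Finset ι} {s : Set ℝ} (hs : Convex ℝ s)
    (hμ : ∀ i, 0 < μ i) (hS : S.Nonempty) (hg : ∀ i ∈ S, g i ∈ s) : condExp μ g S ∈ s := by
  have h := hs.centerMass_mem (fun i _ => (hμ i).le) (Finset.sum_pos (fun i _ => hμ i) hS) hg
  rwa [Finset.centerMass, smul_eq_mul, inv_mul_eq_div] at h

section ConditionalExpectation

variable {μ f : Ω → ℝ}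

lemma expOn_congr {P : FinPartition Ω} {ω ω' : Ω} (h : ω' ∈ P.cell ω) :
    expOn μ f P ω' = expOn μ f P ω := by
  rw [expOn, P.cell_eq ω ω' h, expOn]

lemma expOn_mem_Icc (hμ : ∀ ω, 0 < μ ω) (hf : ∀ ω, f ω ∈ Set.Icc (0 : ℝ) 1)
    (P : FinPartition Ω) (ω : Ω) : expOn μ f P ω ∈ Set.Icc (0 : ℝ) 1 :=
  condExp_mem (convex_Icc 0 1) hμ ⟨ω, P.mem_cell ω⟩ fun ω' _ => hf ω'

/-- The tower property over a union `S` of `P`-cells, against a `P`-measurable weight `g`. -/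
lemma sum_mul_expOn_mul (hμ : ∀ ω, 0 < μ ω) (P : FinPartition Ω) {S : Finset Ω}
    (hS : ∀ ω ∈ S, P.cell ω ⊆ S) {g : Ω → ℝ} (hg : ∀ ω ω', ω' ∈ P.cell ω → g ω' = g ω) :
    ∑ ω ∈ S, μ ω * expOn μ f P ω * g ω = ∑ ω ∈ S, μ ω * f ω * g ω := by
  have hmass : ∀ ω, ∑ x ∈ P.cell ω, μ x ≠ 0 := fun ω =>
    (Finset.sum_pos (fun x _ => hμ x) ⟨ω, P.mem_cell ω⟩).ne'
  calc ∑ ω ∈ S, μ ω * expOn μ f P ω * g ω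
      = ∑ ω ∈ S, ∑ ω' ∈ P.cell ω, μ ω * g ω / (∑ x ∈ P.cell ω, μ x) * (μ ω' * f ω') := by
        refine Finset.sum_congr rfl fun ω _ => ?_
        rw [← Finset.mul_sum, expOn, condExp]
        field_simp
    _ = ∑ ω' ∈ S, ∑ ω ∈ P.cell ω', μ ω * g ω / (∑ x ∈ P.cell ω, μ x) * (μ ω' * f ω') :=
        Finset.sum_comm' fun ω ω' =>
          ⟨fun ⟨hω, hω'⟩ => ⟨mem_cell_comm.1 hω', hS ω hω hω'⟩,
           fun ⟨hω, hω'⟩ => ⟨hS ω' hω' hω, mem_cell_comm.1 hω⟩⟩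
    _ = ∑ ω' ∈ S, (∑ ω ∈ P.cell ω', μ ω) * (g ω' / (∑ x ∈ P.cell ω', μ x) * (μ ω' * f ω')) := by
        refine Finset.sum_congr rfl fun ω' _ => ?_
        rw [Finset.sum_mul]
        refine Finset.sum_congr rfl fun ω hω => ?_
        rw [P.cell_eq ω' ω hω, hg ω' ω hω]
        ring
    _ = ∑ ω ∈ S, μ ω * f ω * g ω := by
        refine Finset.sum_congr rfl fun ω _ => ?_
        field_simp [hmass ω]

lemma condExp_expOn (hμ : ∀ ω, 0 < μ ω) (P : FinPartition Ω) {S : Finset Ω}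
    (hS : ∀ ω ∈ S, P.cell ω ⊆ S) : condExp μ (expOn μ f P) S = condExp μ f S := by
  simpa [condExp] using congrArg (· / ∑ ω ∈ S, μ ω)
    (sum_mul_expOn_mul (f := f) hμ P hS (g := fun _ => 1) fun _ _ _ => rfl)

/-- Pythagoras for the martingale `E_Q, E_P`: the increment `E_P - E_Q` is orthogonal to `E_Q`. -/
lemma norm2_expOn_of_refines (hμ : ∀ ω, 0 < μ ω) {P Q : FinPartition Ω} (hPQ : P.Refines Q) :
    norm2 μ (expOn μ f P) =
      norm2 μ (expOn μ f Q) + ∑ ω, μ ω * (expOn μ f P ω - expOn μ f Q ω) ^ 2 := by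
  set eP := expOn μ f P
  set eQ := expOn μ f Q
  have hP : ∑ ω, μ ω * eP ω * eQ ω = ∑ ω, μ ω * f ω * eQ ω :=
    sum_mul_expOn_mul hμ P (fun _ _ => Finset.subset_univ _)
      fun _ _ h => expOn_congr (hPQ _ h)
  have hQ : ∑ ω, μ ω * eQ ω * eQ ω = ∑ ω, μ ω * f ω * eQ ω :=
    sum_mul_expOn_mul hμ Q (fun _ _ => Finset.subset_univ _) fun _ _ h => expOn_congr h
  have hexpand : ∀ ω, μ ω * (eP ω - eQ ω) ^ 2 =
      μ ω * eP ω ^ 2 - 2 * (μ ω * eP ω * eQ ω) + μ ω * eQ ω * eQ ω := fun ω => by ring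
  have hsq : ∀ ω, μ ω * eQ ω ^ 2 = μ ω * eQ ω * eQ ω := fun ω => by ring
  simp only [norm2, hexpand, hsq, Finset.sum_add_distrib, Finset.sum_sub_distrib,
    ← Finset.mul_sum]
  linarith

lemma norm2_expOn_le_one (hμ : ∀ ω, 0 < μ ω) (hμsum : ∑ ω, μ ω = 1)
    (hf : ∀ ω, f ω ∈ Set.Icc (0 : ℝ) 1) (P : FinPartition Ω) :
    norm2 μ (expOn μ f P) ≤ 1 := by
  rw [← hμsum, norm2]
  refine Finset.sum_le_sum fun ω _ => mul_le_of_le_one_right (hμ ω).le ?_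
  obtain ⟨h0, h1⟩ := expOn_mem_Icc hμ hf P ω
  nlinarith

end ConditionalExpectation

section Message

variable {μ f : Ω → ℝ} {ε : ℝ} {S C : FinPartition Ω} {ω : Ω}

lemma discMsg_congr (hSC : S.Refines C) (ω ω' : Ω) (h : ω' ∈ S.cell ω) :
    discMsg μ f ε S C ω' = discMsg μ f ε S C ω := by
  rw [discMsg, discMsg, expOn_congr h, expOn_congr (hSC ω h)]

lemma discMsg_eq_one (h : discMsg μ f ε S C ω = 1) :
    expOn μ f C ω + ε / 4 < expOn μ f S ω := by
  unfold discMsg at h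
  split_ifs at h with h1
  · exact h1
  · exact absurd h zero_ne_one

lemma discMsg_eq_neg_one (h : discMsg μ f ε S C ω = -1) :
    expOn μ f S ω < expOn μ f C ω - ε / 4 := by
  unfold discMsg at h
  split_ifs at h with h1 h2
  exact h2

lemma discMsg_eq_zero_iff :
    discMsg μ f ε S C ω = 0 ↔ |expOn μ f S ω - expOn μ f C ω| ≤ ε / 4 := by
  rw [abs_sub_le_iff, discMsg]
  split_ifs with h1 h2 <;> simp only [one_ne_zero, true_iff, false_iff] <;>
    first | (push Not at *; constructor <;> linarith) | (intro h; linarith [h.1, h.2])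

/-- Charlie's new expectation is an average of the sender's expectation over points that all
sent the same message from the same Charlie-cell. -/
lemma expOn_refineBy_discMsg_mem (hμ : ∀ ω, 0 < μ ω) (hSC : S.Refines C) {s : Set ℝ}
    (hs : Convex ℝ s)
    (h : ∀ ω', discMsg μ f ε S C ω' = discMsg μ f ε S C ω →
      expOn μ f C ω' = expOn μ f C ω → expOn μ f S ω' ∈ s) :
    expOn μ f (C.refineBy (discMsg μ f ε S C)) ω ∈ s := by
  have hS' := hSC.refineBy (g := discMsg μ f ε S C) (discMsg_congr hSC)
  rw [expOn, ← condExp_expOn hμ S fun _ hω' => hS'.cell_subset_of_mem hω']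
  refine condExp_mem hs hμ ⟨ω, mem_cell _ ω⟩ fun ω' hω' => ?_
  obtain ⟨hC, hm⟩ := (mem_refineBy_cell _).1 hω'
  exact h ω' hm (expOn_congr hC)

lemma le_abs_expOn_refineBy_discMsg_sub (hμ : ∀ ω, 0 < μ ω) (hSC : S.Refines C)
    (h : discMsg μ f ε S C ω ≠ 0) :
    ε / 4 ≤ |expOn μ f (C.refineBy (discMsg μ f ε S C)) ω - expOn μ f C ω| := by
  have hcases : discMsg μ f ε S C ω = 1 ∨ discMsg μ f ε S C ω = -1 := by
    unfold discMsg at h ⊢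
    split_ifs at h ⊢ <;> simp_all
  rcases hcases with h1 | h1
  · have := expOn_refineBy_discMsg_mem hμ hSC (convex_Ici (expOn μ f C ω + ε / 4))
      fun ω' hm hC => (hC ▸ discMsg_eq_one (hm.trans h1)).le
    exact le_abs.2 (Or.inl (by linarith [Set.mem_Ici.1 this]))
  · have := expOn_refineBy_discMsg_mem hμ hSC (convex_Iic (expOn μ f C ω - ε / 4))
      fun ω' hm hC => (hC ▸ discMsg_eq_neg_one (hm.trans h1)).le
    exact le_abs.2 (Or.inr (by linarith [Set.mem_Iic.1 this]))

lemma abs_expOn_refineBy_discMsg_sub_le (hμ : ∀ ω, 0 < μ ω) (hSC : S.Refines C)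
    (h : discMsg μ f ε S C ω = 0) :
    |expOn μ f (C.refineBy (discMsg μ f ε S C)) ω - expOn μ f C ω| ≤ ε / 4 := by
  have := expOn_refineBy_discMsg_mem hμ hSC (convex_closedBall (expOn μ f C ω) (ε / 4))
    fun ω' hm hC => by
      rw [Metric.mem_closedBall, Real.dist_eq, ← hC]
      exact discMsg_eq_zero_iff.1 (hm.trans h)
  rwa [Metric.mem_closedBall, Real.dist_eq] at this

lemma norm2_add_mul_sum_discMsg_ne_zero_le (hμ : ∀ ω, 0 < μ ω) (hSC : S.Refines C)
    (hε : 0 ≤ ε) :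
    norm2 μ (expOn μ f C) +
        (ε / 4) ^ 2 * ∑ ω ∈ Finset.univ.filter (fun ω => discMsg μ f ε S C ω ≠ 0), μ ω ≤
      norm2 μ (expOn μ f (C.refineBy (discMsg μ f ε S C))) := by
  rw [norm2_expOn_of_refines hμ (refineBy_refines _), Finset.mul_sum]
  gcongr
  calc ∑ ω ∈ Finset.univ.filter (fun ω => discMsg μ f ε S C ω ≠ 0), (ε / 4) ^ 2 * μ ω
      ≤ ∑ ω ∈ Finset.univ.filter (fun ω => discMsg μ f ε S C ω ≠ 0),
          μ ω * (expOn μ f (C.refineBy (discMsg μ f ε S C)) ω - expOn μ f C ω) ^ 2 := by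
        refine Finset.sum_le_sum fun ω hω => ?_
        have hmove := le_abs_expOn_refineBy_discMsg_sub hμ hSC (Finset.mem_filter.1 hω).2
        rw [mul_comm, ← sq_abs (_ - _)]
        exact mul_le_mul_of_nonneg_left (pow_le_pow_left₀ (by linarith) hmove 2) (hμ ω).le
    _ ≤ _ := Finset.sum_le_sum_of_subset_of_nonneg (Finset.filter_subset _ _)
        fun ω _ _ => mul_nonneg (hμ ω).le (sq_nonneg _)

end Message

section Protocol

variable (μ f : Ω → ℝ) (ε : ℝ) (PA PB : FinPartition Ω)

noncomputable def disagreementMass (t : ℕ) : ℝ :=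
  ∑ ω ∈ Finset.univ.filter (fun ω =>
      ε < |expOn μ f (discTriple μ f ε PA PB t).1 ω - expOn μ f (discTriple μ f ε PA PB t).2.1 ω|),
    μ ω

noncomputable def charliePotential (t : ℕ) : ℝ :=
  norm2 μ (expOn μ f (discTriple μ f ε PA PB t).2.2)

/-- The message sent at step `t + 1`: by Alice if `t` is even, by Bob if `t` is odd. -/
noncomputable def protocolMsg (t : ℕ) : Ω → ℤ :=
  if t % 2 = 0 then discMsg μ f ε (discTriple μ f ε PA PB t).1 (discTriple μ f ε PA PB t).2.2
  else discMsg μ f ε (discTriple μ f ε PA PB t).2.1 (discTriple μ f ε PA PB t).2.2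

variable {μ f ε PA PB}

lemma discTriple_refines (t : ℕ) :
    (discTriple μ f ε PA PB t).1.Refines (discTriple μ f ε PA PB t).2.2 ∧
      (discTriple μ f ε PA PB t).2.1.Refines (discTriple μ f ε PA PB t).2.2 := by
  induction t with
  | zero => exact ⟨fun _ => Finset.subset_univ _, fun _ => Finset.subset_univ _⟩
  | succ t ih =>
    rw [discTriple]
    split_ifs
    · exact ⟨ih.1.refineBy (discMsg_congr ih.1), ih.2.refineBy_mono _⟩
    · exact ⟨ih.1.refineBy_mono _, ih.2.refineBy (discMsg_congr ih.2)⟩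

lemma discTriple_succ_charlie (t : ℕ) :
    (discTriple μ f ε PA PB (t + 1)).2.2 =
      (discTriple μ f ε PA PB t).2.2.refineBy (protocolMsg μ f ε PA PB t) := by
  rw [discTriple, protocolMsg]
  split_ifs <;> first | rfl | omega

lemma charliePotential_add_mul_sum_protocolMsg_ne_zero_le (hμ : ∀ ω, 0 < μ ω) (hε : 0 ≤ ε)
    (t : ℕ) :
    charliePotential μ f ε PA PB t +
        (ε / 4) ^ 2 * ∑ ω ∈ Finset.univ.filter (fun ω => protocolMsg μ f ε PA PB t ω ≠ 0), μ ω ≤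
      charliePotential μ f ε PA PB (t + 1) := by
  rw [charliePotential, charliePotential, discTriple_succ_charlie, protocolMsg]
  obtain ⟨hA, hB⟩ := discTriple_refines (μ := μ) (f := f) (ε := ε) (PA := PA) (PB := PB) t
  split_ifs
  · exact norm2_add_mul_sum_discMsg_ne_zero_le hμ hA hε
  · exact norm2_add_mul_sum_discMsg_ne_zero_le hμ hB hε

lemma disagreementMass_le (hμ : ∀ ω, 0 < μ ω) (hε : 0 ≤ ε) (k : ℕ) :
    disagreementMass μ f ε PA PB (2 * k + 1) ≤
      ∑ ω ∈ Finset.univ.filter (fun ω => protocolMsg μ f ε PA PB (2 * k) ω ≠ 0), μ ω +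
        ∑ ω ∈ Finset.univ.filter (fun ω => protocolMsg μ f ε PA PB (2 * k + 1) ω ≠ 0), μ ω := by
  set p := discTriple μ f ε PA PB (2 * k)
  set q := discTriple μ f ε PA PB (2 * k + 1)
  have hq : q = (p.1, p.2.1.refineBy (discMsg μ f ε p.1 p.2.2),
      p.2.2.refineBy (discMsg μ f ε p.1 p.2.2)) := by
    simp only [q, discTriple, if_pos (show (2 * k + 1) % 2 = 1 by omega)]; rfl
  have hmA : protocolMsg μ f ε PA PB (2 * k) = discMsg μ f ε p.1 p.2.2 := by
    rw [protocolMsg, if_pos (by omega)]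
  have hmB : protocolMsg μ f ε PA PB (2 * k + 1) = discMsg μ f ε q.2.1 q.2.2 := by
    rw [protocolMsg, if_neg (by omega)]
  have hcover : Finset.univ.filter (fun ω => ε < |expOn μ f q.1 ω - expOn μ f q.2.1 ω|) ⊆
      Finset.univ.filter (fun ω => protocolMsg μ f ε PA PB (2 * k) ω ≠ 0) ∪
        Finset.univ.filter (fun ω => protocolMsg μ f ε PA PB (2 * k + 1) ω ≠ 0) := by
    intro ω
    simp only [Finset.mem_union, Finset.mem_filter, Finset.mem_univ, true_and, hmA, hmB]
    contrapose!
    rintro ⟨hA, hB⟩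
    have hAC := discMsg_eq_zero_iff.1 hA
    have hBC := discMsg_eq_zero_iff.1 hB
    have hCC : |expOn μ f q.2.2 ω - expOn μ f p.2.2 ω| ≤ ε / 4 := by
      rw [hq]
      exact abs_expOn_refineBy_discMsg_sub_le hμ (discTriple_refines (2 * k)).1 hA
    rw [show q.1 = p.1 by rw [hq]]
    rw [abs_le] at hAC hBC hCC ⊢
    constructor <;> linarith
  calc disagreementMass μ f ε PA PB (2 * k + 1)
      ≤ ∑ ω ∈ Finset.univ.filter (fun ω => protocolMsg μ f ε PA PB (2 * k) ω ≠ 0) ∪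
          Finset.univ.filter (fun ω => protocolMsg μ f ε PA PB (2 * k + 1) ω ≠ 0), μ ω :=
        Finset.sum_le_sum_of_subset_of_nonneg hcover fun ω _ _ => (hμ ω).le
    _ ≤ _ := by
        rw [← Finset.sum_union_inter]
        exact le_add_of_nonneg_right (Finset.sum_nonneg fun ω _ => (hμ ω).le)

lemma charliePotential_add_mul_disagreementMass_le (hμ : ∀ ω, 0 < μ ω) (hε : 0 ≤ ε) (k : ℕ) :
    charliePotential μ f ε PA PB (2 * k) + (ε / 4) ^ 2 * disagreementMass μ f ε PA PB (2 * k + 1) ≤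
      charliePotential μ f ε PA PB (2 * k + 2) := by
  have hA := charliePotential_add_mul_sum_protocolMsg_ne_zero_le
    (f := f) (PA := PA) (PB := PB) hμ hε (2 * k)
  have hB := charliePotential_add_mul_sum_protocolMsg_ne_zero_le
    (f := f) (PA := PA) (PB := PB) hμ hε (2 * k + 1)
  have hD := mul_le_mul_of_nonneg_left
    (disagreementMass_le (f := f) (PA := PA) (PB := PB) hμ hε k) (sq_nonneg (ε / 4))
  linarith

end Protocol

lemma exists_le_of_forall_add_mul_le {Φ D : ℕ → ℝ} {B c δ : ℝ} (hc : 0 < c) (hδ : 0 < δ)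
    (h0 : 0 ≤ Φ 0) (hB : ∀ k, Φ k ≤ B) (hstep : ∀ k, Φ k + c * D k ≤ Φ (k + 1)) :
    ∃ k : ℕ, (k : ℝ) ≤ B / (c * δ) ∧ D k ≤ δ := by
  by_contra! hD
  have hx : 0 ≤ B / (c * δ) := div_nonneg (h0.trans (hB 0)) (by positivity)
  set N := ⌊B / (c * δ)⌋₊ + 1
  have hgrow : ∀ n ≤ N, n * (c * δ) ≤ Φ n := by
    intro n
    induction n with
    | zero => simpa using h0
    | succ n ih =>
      intro hn
      have hDn := hD n ((Nat.le_floor_iff hx).1 (by omega))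
      have := hstep n
      push_cast
      nlinarith [ih (by omega)]
  have hN : B < N * (c * δ) :=
    (div_lt_iff₀ (by positivity)).1 (by simpa [N] using Nat.lt_floor_add_one _)
  linarith [hgrow N le_rfl, hB N]

theorem stmt_4_general (μ : Ω → ℝ) (f : Ω → ℝ)
    (hμpos : ∀ ω, 0 < μ ω) (hμsum : ∑ ω, μ ω = 1)
    (hf : ∀ ω, f ω ∈ Set.Icc (0 : ℝ) 1)
    (PA PB : FinPartition Ω)
    (ε δ : ℝ) (hε : ε ∈ Set.Ioo (0 : ℝ) 1) (hδ : δ ∈ Set.Ioc (0 : ℝ) 1) :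
    ∃ t : ℕ, (t : ℝ) ≤ 3072 / (δ * ε ^ 2) ∧
      ∑ ω ∈ Finset.univ.filter (fun ω =>
          ε < |expOn μ f (discTriple μ f ε PA PB t).1 ω -
                expOn μ f (discTriple μ f ε PA PB t).2.1 ω|),
        μ ω ≤ δ := by
  obtain ⟨hε0, hε1⟩ := hε
  obtain ⟨hδ0, hδ1⟩ := hδ
  obtain ⟨k, hk, hD⟩ := exists_le_of_forall_add_mul_le
    (Φ := fun k => charliePotential μ f ε PA PB (2 * k))
    (D := fun k => disagreementMass μ f ε PA PB (2 * k + 1))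
    (by positivity : 0 < (ε / 4) ^ 2) hδ0 (norm2_nonneg (fun ω => (hμpos ω).le) _)
    (fun _ => norm2_expOn_le_one hμpos hμsum hf _)
    (fun k => charliePotential_add_mul_disagreementMass_le hμpos hε0.le k)
  refine ⟨2 * k + 1, ?_, hD⟩
  have hde : 0 < δ * ε ^ 2 := by positivity
  have hone : 1 ≤ 1 / (δ * ε ^ 2) := by
    rw [le_div_iff₀ hde, one_mul]
    nlinarith
  rw [show 1 / ((ε / 4) ^ 2 * δ) = 16 * (1 / (δ * ε ^ 2)) by field_simp; ring] at hk
  rw [div_eq_mul_one_div]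
  push_cast
  linarith

theorem stmt_4 [Nonempty Ω] (μ : Ω → ℝ) (f : Ω → ℝ)
    (hμpos : ∀ ω, 0 < μ ω) (hμsum : ∑ ω, μ ω = 1)
    (hf : ∀ ω, f ω ∈ Set.Icc (0 : ℝ) 1)
    (PA PB : FinPartition Ω)
    (ε δ : ℝ) (hε : ε ∈ Set.Ioo (0 : ℝ) 1) (hδ : δ ∈ Set.Ioc (0 : ℝ) 1) :
    ∃ t : ℕ, (t : ℝ) ≤ 3072 / (δ * ε ^ 2) ∧
      ∑ ω ∈ Finset.univ.filter (fun ω =>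
          ε < |expOn μ f (discTriple μ f ε PA PB t).1 ω -
                expOn μ f (discTriple μ f ε PA PB t).2.1 ω|),
        μ ω ≤ δ :=
  stmt_4_general μ f hμpos hμsum hf PA PB ε δ hε hδ
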